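/- arXiv:2303.16567 — 2 statements merged into one kernel-verified Lean document; each statement's English description precedes it below -/
import Mathlib

section
/- Unmarking all reached nodes yields the empty (hence parent-closed) set: if S is a parent-closed marked set of a rooted tree T and a depth-first procedure from the root unmarks every node of S it reaches (recursing into a node only if it is marked), then after the procedure the marked set is empty. -/
/-- Unmarking all reached nodes yields the empty marked set: if S is a
parent-closed marked set of a rooted tree and the depth-first procedure from the root
(recursing into a node only if it is marked, then unmarking it) unmarks every node it
reaches, then afterwards the marked set is empty. The set of nodes reached (and hence
unmarked) by the procedure is exactly the set of marked nodes connected to the root by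
a chain of marked nodes. -/
theorem stmt16 {V : Type*} [Finite V] (root : V) (parent : V → Option V)
    (hroot : parent root = none)
    (hreach : ∀ v, Relation.ReflTransGen (fun a b => parent a = some b) v root)
    (S : Set V)
    (hclosed : ∀ v ∈ S, ∀ p, parent v = some p → p ∈ S) :
    S \ {v | root ∈ S ∧ v ∈ S ∧
        Relation.ReflTransGen (fun a b => parent b = some a ∧ a ∈ S ∧ b ∈ S) root v}
      = ∅ := by
  ext v
  simp only [Set.mem_diff, Set.mem_setOf_eq, Set.mem_empty_iff_false, iff_false, not_and,
    not_not]
  intro hvS hn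
  have key : ∀ w, Relation.ReflTransGen (fun a b => parent a = some b) w root → w ∈ S →
      root ∈ S ∧ Relation.ReflTransGen
        (fun a b => parent b = some a ∧ a ∈ S ∧ b ∈ S) root w := by
    intro w hw
    induction hw using Relation.ReflTransGen.head_induction_on with
    | refl => intro h; exact ⟨h, Relation.ReflTransGen.refl⟩
    | head hab _ ih =>
      rename_i a b _
      intro haS
      have hbS : b ∈ S := hclosed a haS b hab
      obtain ⟨hr, hchain⟩ := ih hbS
      exact ⟨hr, hchain.tail ⟨hab, hbS, haS⟩⟩
  obtain ⟨hr, hc⟩ := key v (hreach v) hvS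
  exact (hn hr hvS hc).elim
end

section
/- For a hierarchical Mealy machine Z = (X, T) obtained by composing sub-HiMMs Z_1, …, Z_n under a root machine M, any optimal trajectory of Z from a state s_init contained in Z_i to a state s_goal contained in Z_j with i ≠ j decomposes as: an (exit portion inside Z_i) followed by transitions that, at each visit to a sub-HiMM Z_k with k ∉ {j}, traverse it from its start state to an exit with cost at least c_x^{Z_k} for the exiting input x, followed by a final portion entirely inside Z_j. Consequently, the optimal cost from s_init to s_goal in Z equals the optimal cost in the reduced problem where each intermediate sub-HiMM Z_k is replaced by a single state with exit costs c_x^{Z_k}. -/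
open scoped NNReal ENNReal

attribute [local instance] Classical.propDecidable

section

variable {S QM I : Type*}

/-- A trajectory of the flat (leaf-state) semantics of a hierarchical machine. -/
def IsTraj (ψ : S → I → Option S) (z : List (S × I)) : Prop :=
  List.Chain' (fun a b => ψ a.1 a.2 = some b.1) z

/-- Cumulative cost of a trajectory (costs valued in `ℝ≥0∞`). -/
noncomputable def tcost (χ : S → I → ℝ≥0∞) (z : List (S × I)) : ℝ≥0∞ :=
  (z.map fun p => χ p.1 p.2).sum

/-- A trajectory connecting leaf state `a` to leaf state `b`. -/
def ConnectsFrom (ψ : S → I → Option S) (a b : S) (z : List (S × I)) : Prop :=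
  IsTraj ψ z ∧ z ≠ [] ∧ (∀ p ∈ z.head?, p.1 = a) ∧ (∀ p ∈ z.getLast?, ψ p.1 p.2 = some b)

/-- Optimal (minimal) cumulative cost over all trajectories from `a` to `b`. -/
noncomputable def optCost (ψ : S → I → Option S) (χ : S → I → ℝ≥0∞) (a b : S) : ℝ≥0∞ :=
  ⨅ z : {z : List (S × I) // ConnectsFrom ψ a b z}, tcost χ z.1

/-- The optimal exit cost `c_x^{Z_k}` of the sub-HiMM sitting at root state `k`:
the minimal cost of a trajectory starting at `start(Z_k)`, remaining inside `Z_k`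
(the block `{s | part s = k}`), and exiting with input `x` (the final, exiting
transition's cost is excluded). -/
noncomputable def cExit (ψ : S → I → Option S) (χ : S → I → ℝ≥0∞)
    (part : S → QM) (st : QM → S) (k : QM) (x : I) : ℝ≥0∞ :=
  ⨅ z : {z : List (S × I) // IsTraj ψ z ∧ (∀ p ∈ z.head?, p.1 = st k) ∧
      (∀ p ∈ z, part p.1 = k) ∧
      ∃ p ∈ z.getLast?, p.2 = x ∧ ∃ t, ψ p.1 p.2 = some t ∧ part t ≠ k},
    (z.1.dropLast.map fun p => χ p.1 p.2).sum

/-- The transition function of the reduced problem: each collapsed sub-HiMM `Z_k` is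
replaced by the single state `st k`, from which an input `x` moves (as the root
machine `δM` prescribes) to the entry state of the next block; on all non-collapsed
blocks the original flat dynamics `ψ` is kept. -/
noncomputable def psiRed (ψ : S → I → Option S) (part : S → QM) (st : QM → S)
    (δM : QM → I → Option QM) (collapsed : QM → Prop) (s : S) (x : I) : Option S :=
  if collapsed (part s) then
    (if s = st (part s) then (δM (part s) x).map st else none)
  else ψ s x

/-- The cost function of the reduced problem: traversing a collapsed sub-HiMM `Z_k`
with exiting input `x` costs its optimal exit cost `c_x^{Z_k}` plus the cost
`γM(k, x)` of the exiting transition of the root machine; elsewhere costs are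
unchanged. -/
noncomputable def chiRed (ψ : S → I → Option S) (χ : S → I → ℝ≥0∞) (part : S → QM)
    (st : QM → S) (γM : QM → I → ℝ≥0) (collapsed : QM → Prop) (s : S) (x : I) : ℝ≥0∞ :=
  if collapsed (part s) then cExit ψ χ part st (part s) x + (γM (part s) x : ℝ≥0∞)
  else χ s x

/-! A flat run ending outside the collapsed blocks is cut at its block exits. Since crossings obey
the root machine, every maximal stay in a collapsed sub-machine `Z_k` is entered at `st k`, so it
competes in the infimum defining `c_x^{Z_k}` and costs at least that much: replacing each stay by
the single reduced step gives a reduced run that is no more expensive. Conversely, the cost of a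
reduced step out of `st k` is an infimum of costs of flat runs from `st k` to the same target, so
by the triangle inequality every reduced run costs at least the flat optimum. -/

-- Unlike `ConnectsFrom`, `IsRun` admits the empty run (from `a` to itself), so runs split and
-- concatenate freely.
def IsRun (ψ : S → I → Option S) : S → S → List (S × I) → Prop
  | a, b, [] => a = b
  | a, b, (s, x) :: z => s = a ∧ ∃ t, ψ s x = some t ∧ IsRun ψ t b z

section Runs

variable {ψ : S → I → Option S} {a b c : S} {p q : S × I} {u v z : List (S × I)}

theorem isTraj_singleton : IsTraj ψ [p] := List.isChain_singleton _

theorem isTraj_cons_cons : IsTraj ψ (p :: q :: z) ↔ ψ p.1 p.2 = some q.1 ∧ IsTraj ψ (q :: z) :=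
  List.isChain_cons_cons

@[simp] theorem isRun_nil : IsRun ψ a b [] ↔ a = b := Iff.rfl

@[simp] theorem isRun_cons :
    IsRun ψ a b (p :: z) ↔ p.1 = a ∧ ∃ t, ψ p.1 p.2 = some t ∧ IsRun ψ t b z := Iff.rfl

theorem isRun_append : IsRun ψ a c (u ++ v) ↔ ∃ b, IsRun ψ a b u ∧ IsRun ψ b c v := by
  induction u generalizing a with
  | nil => simp
  | cons p u ih => simp only [List.cons_append, isRun_cons, ih]; aesop

theorem isRun_concat : IsRun ψ a b (u ++ [p]) ↔ IsRun ψ a p.1 u ∧ ψ p.1 p.2 = some b := by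
  simp only [isRun_append, isRun_cons, isRun_nil]
  aesop

theorem isRun_cons_iff_isTraj : IsRun ψ a b (p :: z) ↔
    p.1 = a ∧ IsTraj ψ (p :: z) ∧ ψ ((p :: z).getLast (List.cons_ne_nil _ _)).1
      ((p :: z).getLast (List.cons_ne_nil _ _)).2 = some b := by
  induction z generalizing p a with
  | nil => simp [isTraj_singleton]
  | cons q z ih => simp only [isRun_cons, ih, isTraj_cons_cons, List.getLast_cons_cons]; aesop

theorem connectsFrom_iff_isRun : ConnectsFrom ψ a b z ↔ z ≠ [] ∧ IsRun ψ a b z := by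
  cases z with
  | nil => simp [ConnectsFrom]
  | cons p z =>
    rw [ConnectsFrom, isRun_cons_iff_isTraj]
    simp [List.getLast?_eq_some_getLast, and_left_comm]

end Runs

section Costs

variable {ψ : S → I → Option S} {χ : S → I → ℝ≥0∞} {a b c : S} {p : S × I}
  {u v z : List (S × I)}

theorem tcost_append : tcost χ (u ++ v) = tcost χ u + tcost χ v := by
  simp [tcost]

theorem tcost_concat : tcost χ (u ++ [p]) = tcost χ u + χ p.1 p.2 := by
  simp [tcost]

theorem tcost_cons : tcost χ (p :: u) = χ p.1 p.2 + tcost χ u := by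
  simp [tcost]

theorem optCost_le_tcost (hz : z ≠ []) (h : IsRun ψ a b z) : optCost ψ χ a b ≤ tcost χ z :=
  iInf_le_of_le ⟨z, connectsFrom_iff_isRun.mpr ⟨hz, h⟩⟩ le_rfl

theorem le_optCost {e : ℝ≥0∞} (h : ∀ z, z ≠ [] → IsRun ψ a b z → e ≤ tcost χ z) :
    e ≤ optCost ψ χ a b :=
  le_iInf fun z => (connectsFrom_iff_isRun.mp z.2).elim (h z.1)

theorem optCost_triangle : optCost ψ χ a c ≤ optCost ψ χ a b + optCost ψ χ b c := by
  simp only [optCost, ENNReal.iInf_add, ENNReal.add_iInf]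
  refine le_iInf₂ fun v u => ?_
  obtain ⟨hu, hru⟩ := connectsFrom_iff_isRun.mp u.2
  obtain ⟨-, hrv⟩ := connectsFrom_iff_isRun.mp v.2
  rw [← tcost_append]
  exact optCost_le_tcost (by simp [hu]) (isRun_append.mpr ⟨b, hru, hrv⟩)

end Costs

section ExitCost

variable {ψ : S → I → Option S} {χ : S → I → ℝ≥0∞} {part : S → QM} {st : QM → S} {k : QM}
  {t : S} {x : I} {p : S × I} {u : List (S × I)}

theorem cExit_le_tcost (hrun : IsRun ψ (st k) t (u ++ [p]))
    (hin : ∀ r ∈ u ++ [p], part r.1 = k) (ht : part t ≠ k) :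
    cExit ψ χ part st k p.2 ≤ tcost χ u := by
  obtain ⟨htraj, -, hhead, -⟩ := connectsFrom_iff_isRun.mpr ⟨by simp, hrun⟩
  have hstep : ψ p.1 p.2 = some t := (isRun_concat.mp hrun).2
  refine iInf_le_of_le ⟨u ++ [p], htraj, hhead, hin, p, by simp, rfl, t, hstep, ht⟩ ?_
  simp [tcost]

theorem le_cExit {e : ℝ≥0∞} (h : ∀ u p t, IsRun ψ (st k) t (u ++ [p]) →
      (∀ r ∈ u ++ [p], part r.1 = k) → p.2 = x → part t ≠ k → e ≤ tcost χ u) :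
    e ≤ cExit ψ χ part st k x := by
  refine le_iInf fun ⟨z, htraj, hhead, hin, p, hp, hx, t, ht, hpt⟩ => ?_
  obtain ⟨u, rfl⟩ : ∃ u, z = u ++ [p] :=
    ⟨z.dropLast, (List.dropLast_append_getLast? p hp).symm⟩
  have hrun : IsRun ψ (st k) t (u ++ [p]) :=
    (connectsFrom_iff_isRun.mp ⟨htraj, by simp, hhead, by simp [ht]⟩).2
  simpa [tcost] using h u p t hrun hin hx hpt

end ExitCost

theorem IsRun.exists_exit {ψ : S → I → Option S} {P : S → Prop} {a b : S}
    {z : List (S × I)} (hz : IsRun ψ a b z) (ha : P a) (hb : ¬ P b) :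
    ∃ u p t v, z = u ++ p :: v ∧ (∀ r ∈ u ++ [p], P r.1) ∧ IsRun ψ a t (u ++ [p]) ∧
      ¬ P t ∧ IsRun ψ t b v := by
  induction z generalizing a with
  | nil => exact absurd (hz ▸ ha) hb
  | cons p z ih =>
    obtain ⟨rfl, t, hp, hz⟩ := hz
    by_cases ht : P t
    · obtain ⟨u, q, t', v, rfl, hin, hrun, ht', hv⟩ := ih hz ht
      refine ⟨p :: u, q, t', v, rfl, ?_, ⟨rfl, t, hp, hrun⟩, ht', hv⟩
      simpa [ha] using hin
    · exact ⟨[], p, t, z, rfl, by simpa using ha, by simpa using hp, ht, hz⟩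

def FollowsRoot (ψ : S → I → Option S) (χ : S → I → ℝ≥0∞) (part : S → QM) (st : QM → S)
    (δM : QM → I → Option QM) (γM : QM → I → ℝ≥0) : Prop :=
  ∀ s x t, ψ s x = some t → part t ≠ part s →
    δM (part s) x = some (part t) ∧ t = st (part t) ∧ χ s x = γM (part s) x

section Reduction

variable {ψ : S → I → Option S} {χ : S → I → ℝ≥0∞} {part : S → QM} {st : QM → S}
  {δM : QM → I → Option QM} {γM : QM → I → ℝ≥0} {collapsed : QM → Prop}

theorem optCost_le_chiRed (hroot : FollowsRoot ψ χ part st δM γM) {s t : S} {x : I}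
    (h : psiRed ψ part st δM collapsed s x = some t) :
    optCost ψ χ s t ≤ chiRed ψ χ part st γM collapsed s x := by
  by_cases hc : collapsed (part s)
  · simp only [psiRed, hc, if_true, Option.ite_none_right_eq_some, Option.map_eq_some_iff] at h
    obtain ⟨hs, q, hq, rfl⟩ := h
    -- move `γM` to the left, so that the bound is against the infimum `cExit` alone
    rw [chiRed, if_pos hc, ← tsub_le_iff_right]
    refine le_cExit fun u p t hrun hin hx ht => ?_
    have hp : ψ p.1 p.2 = some t := (isRun_concat.mp hrun).2
    have hpk : part p.1 = part s := hin p (by simp)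
    obtain ⟨hδ, htst, hχ⟩ := hroot _ _ _ hp (hpk ▸ ht)
    rw [hpk, hx, hq, Option.some_inj] at hδ
    rw [tsub_le_iff_right, ← hpk, ← hx, ← hχ, ← tcost_concat, hδ, ← htst]
    exact optCost_le_tcost (by simp) (hs ▸ hrun)
  · simp only [psiRed, hc, if_false] at h
    simpa [chiRed, hc, tcost] using
      optCost_le_tcost (χ := χ) (z := [(s, x)]) (by simp) (by simpa using h)

theorem optCost_le_tcost_chiRed (hroot : FollowsRoot ψ χ part st δM γM) {a b : S}
    {w : List (S × I)} (hw : w ≠ []) (hrun : IsRun (psiRed ψ part st δM collapsed) a b w) :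
    optCost ψ χ a b ≤ tcost (chiRed ψ χ part st γM collapsed) w := by
  induction w generalizing a with
  | nil => exact absurd rfl hw
  | cons p w ih =>
    obtain ⟨rfl, t, hp, hrun⟩ := hrun
    rw [tcost_cons]
    rcases eq_or_ne w [] with rfl | hw'
    · obtain rfl : t = b := hrun
      simpa [tcost] using optCost_le_chiRed hroot hp
    · exact optCost_triangle.trans (add_le_add (optCost_le_chiRed hroot hp) (ih hw' hrun))

theorem exists_reduced_step (hroot : FollowsRoot ψ χ part st δM γM) {a b : S}
    {z : List (S × I)} (hz : IsRun ψ a b z) (hne : z ≠ []) (hb : ¬ collapsed (part b))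
    (ha : collapsed (part a) → a = st (part a)) :
    ∃ x t u v, z = u ++ v ∧ u ≠ [] ∧ psiRed ψ part st δM collapsed a x = some t ∧
      chiRed ψ χ part st γM collapsed a x ≤ tcost χ u ∧ IsRun ψ t b v ∧
      (collapsed (part t) → t = st (part t)) := by
  by_cases hc : collapsed (part a)
  · obtain ⟨u, p, t, v, rfl, hin, hrun, ht, hv⟩ :=
      hz.exists_exit (P := fun s => part s = part a) rfl (fun h => hb (h ▸ hc))
    have hp : ψ p.1 p.2 = some t := (isRun_concat.mp hrun).2
    have hpa : part p.1 = part a := hin p (by simp)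
    obtain ⟨hδ, htst, hχ⟩ := hroot _ _ _ hp (hpa ▸ ht)
    rw [hpa] at hδ hχ
    refine ⟨p.2, t, u ++ [p], v, by simp, by simp, ?_, ?_, hv, fun _ => htst⟩
    · simp [psiRed, hc, ← ha hc, hδ, ← htst]
    · rw [chiRed, if_pos hc, tcost_concat, hχ]
      exact add_le_add_left (cExit_le_tcost (ha hc ▸ hrun) hin ht) _
  · obtain ⟨p, v, rfl⟩ := List.exists_cons_of_ne_nil hne
    obtain ⟨rfl, t, hp, hv⟩ := hz
    refine ⟨p.2, t, [p], v, rfl, by simp, by simp [psiRed, hc, hp], by simp [chiRed, hc, tcost],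
      hv, fun hct => (hroot _ _ _ hp fun h => hc (h ▸ hct)).2.1⟩

theorem exists_reduced_run (hroot : FollowsRoot ψ χ part st δM γM) {b : S}
    (hb : ¬ collapsed (part b)) {a : S} {z : List (S × I)} (hz : IsRun ψ a b z)
    (ha : collapsed (part a) → a = st (part a)) :
    ∃ w, IsRun (psiRed ψ part st δM collapsed) a b w ∧ (w = [] → z = []) ∧
      tcost (chiRed ψ χ part st γM collapsed) w ≤ tcost χ z := by
  induction hn : z.length using Nat.strong_induction_on generalizing a z with
  | _ n ih =>
  rcases eq_or_ne z [] with rfl | hne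
  · exact ⟨[], hz, fun _ => rfl, le_rfl⟩
  obtain ⟨x, t, u, v, rfl, hu, hstep, hcost, hv, ht⟩ := exists_reduced_step hroot hz hne hb ha
  have hlen : v.length < n := by
    rw [← hn, List.length_append]
    exact Nat.lt_add_of_pos_left (List.length_pos_iff.mpr hu)
  obtain ⟨w, hw, -, hwcost⟩ := ih _ hlen hv ht rfl
  refine ⟨(a, x) :: w, ⟨rfl, t, hstep, hw⟩, by simp, ?_⟩
  rw [tcost_cons, tcost_append]
  exact add_le_add hcost hwcost

theorem optCost_eq_optCost_reduced (hroot : FollowsRoot ψ χ part st δM γM) {a b : S}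
    (ha : collapsed (part a) → a = st (part a)) (hb : ¬ collapsed (part b)) :
    optCost ψ χ a b =
      optCost (psiRed ψ part st δM collapsed) (chiRed ψ χ part st γM collapsed) a b := by
  refine le_antisymm (le_optCost fun w hw hrun => optCost_le_tcost_chiRed hroot hw hrun)
    (le_optCost fun z hz hrun => ?_)
  obtain ⟨w, hw, hne, hcost⟩ := exists_reduced_run hroot hb hrun ha
  exact (optCost_le_tcost (mt hne hz) hw).trans hcost

end Reduction

theorem List.eq_take_append_getElem_cons_take_drop {α : Type*} (z : List α) {a b : ℕ}
    (ha : 0 < a) (hab : a ≤ b) (hb : b < z.length) :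
    z = z.take (a - 1) ++ z[a - 1] :: ((z.drop a).take (b - a + 1) ++ z.drop (b + 1)) := by
  conv_lhs => rw [← List.take_append_drop a z, ← List.take_append_drop (b - a + 1) (z.drop a),
    List.drop_drop, show a + (b - a + 1) = b + 1 by omega]
  obtain ⟨n, rfl⟩ : ∃ n, a = n + 1 := ⟨a - 1, by omega⟩
  rw [List.take_succ_eq_append_getElem (by omega), List.append_assoc, List.singleton_append]
  rfl

section Blocks

variable {ψ : S → I → Option S} {χ : S → I → ℝ≥0∞} {part : S → QM} {st : QM → S}
  {δM : QM → I → Option QM} {γM : QM → I → ℝ≥0} {k : QM}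

theorem entry_eq_st_and_cExit_le (hroot : FollowsRoot ψ χ part st δM γM) {c d : S}
    {q p : S × I} {u : List (S × I)} (hq : ψ q.1 q.2 = some c) (hqk : part q.1 ≠ k)
    (hrun : IsRun ψ c d (u ++ [p])) (hin : ∀ r ∈ u ++ [p], part r.1 = k) (hd : part d ≠ k) :
    c = st k ∧ cExit ψ χ part st k p.2 ≤ tcost χ u := by
  have hck : part c = k := by
    cases u with
    | nil => exact (show p.1 = c from hrun.1) ▸ hin p (by simp)
    | cons r u => exact (show r.1 = c from hrun.1) ▸ hin r (by simp)
  obtain ⟨-, hc, -⟩ := hroot _ _ _ hq (by rw [hck]; exact hqk.symm)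
  rw [hck] at hc
  exact ⟨hc, cExit_le_tcost (hc ▸ hrun) hin hd⟩

theorem entry_eq_st_and_cExit_le_of_getElem (hroot : FollowsRoot ψ χ part st δM γM) {s₀ s₁ : S}
    {z : List (S × I)} (hz : IsRun ψ s₀ s₁ z) (hk : part s₁ ≠ k) {a b : ℕ} (ha : 0 < a)
    (hab : a ≤ b) (hb : b < z.length)
    (hin : ∀ idx, a ≤ idx → idx ≤ b → ∀ p ∈ z[idx]?, part p.1 = k)
    (hprev : ∀ p ∈ z[a - 1]?, part p.1 ≠ k) (hnext : ∀ p ∈ z[b + 1]?, part p.1 ≠ k) :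
    (∀ p ∈ z[a]?, p.1 = st k) ∧
      (∀ p ∈ z[b]?, cExit ψ χ part st k p.2 ≤ tcost χ ((z.drop a).take (b - a))) := by
  have hblock : (z.drop a).take (b - a + 1) = (z.drop a).take (b - a) ++ [z[b]] := by
    rw [List.take_succ_eq_append_getElem (by rw [List.length_drop]; omega)]
    simp [show a + (b - a) = b by omega]
  have hhead : ∃ l, (z.drop a).take (b - a + 1) = z[a] :: l :=
    ⟨_, by rw [List.drop_eq_getElem_cons (by omega), List.take_succ_cons]⟩
  rw [List.eq_take_append_getElem_cons_take_drop z ha hab hb, isRun_append] at hz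
  obtain ⟨-, -, ⟨-, c, hq, hz⟩⟩ := hz
  obtain ⟨d, hblk, hpost⟩ := isRun_append.mp hz
  have hd : part d ≠ k := by
    rcases Nat.lt_or_ge (b + 1) z.length with h | h
    · rw [List.drop_eq_getElem_cons h] at hpost
      exact hpost.1 ▸ hnext _ (by simp [h])
    · rw [List.drop_eq_nil_of_le h] at hpost
      exact (show d = s₁ from hpost) ▸ hk
  have hmem : ∀ r ∈ (z.drop a).take (b - a + 1), part r.1 = k := by
    intro r hr
    obtain ⟨i, hi, rfl⟩ := List.mem_iff_getElem.mp hr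
    simp only [List.length_take, List.length_drop] at hi
    exact hin (a + i) (by omega) (by omega) _ (by simp)
  have hca : z[a].1 = c := by
    obtain ⟨l, hl⟩ := hhead
    exact (hl ▸ hblk).1
  obtain ⟨hc, hle⟩ := entry_eq_st_and_cExit_le hroot hq (hprev _ (by simp)) (hblock ▸ hblk)
    (hblock ▸ hmem) hd
  refine ⟨fun p hp => ?_, fun p hp => ?_⟩
  · rw [List.getElem?_eq_getElem (by omega), Option.mem_some_iff] at hp
    rw [← hp, hca, hc]
  · rw [List.getElem?_eq_getElem hb, Option.mem_some_iff] at hp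
    exact hp ▸ hle

end Blocks

theorem stmt18_general (ψ : S → I → Option S) (χ : S → I → ℝ≥0)
    (part : S → QM) (st : QM → S) (IsSub : QM → Prop)
    (δM : QM → I → Option QM) (γM : QM → I → ℝ≥0)
    (hcross : ∀ s x t, ψ s x = some t → part t ≠ part s →
      δM (part s) x = some (part t) ∧ t = st (part t) ∧ χ s x = γM (part s) x)
    (sInit sGoal : S) :
    -- the collapsed (intermediate) sub-HiMMs and the `ℝ≥0∞`-valued flat cost
    let collapsed : QM → Prop := fun q => IsSub q ∧ q ≠ part sInit ∧ q ≠ part sGoal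
    let χE : S → I → ℝ≥0∞ := fun s x => (χ s x : ℝ≥0∞)
    -- (1) decomposition of optimal trajectories
    (∀ z, ConnectsFrom ψ sInit sGoal z → tcost χE z = optCost ψ χE sInit sGoal →
      ∀ k, collapsed k → ∀ a b : ℕ, 0 < a → a ≤ b → b < z.length →
        (∀ idx, a ≤ idx → idx ≤ b → ∀ p ∈ z[idx]?, part p.1 = k) →
        (∀ p ∈ z[a-1]?, part p.1 ≠ k) →
        (∀ p ∈ z[b+1]?, part p.1 ≠ k) →
        (∀ p ∈ z[a]?, p.1 = st k) ∧
        (∀ p ∈ z[b]?, cExit ψ χE part st k p.2 ≤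
          (((z.drop a).take (b - a)).map fun r => χE r.1 r.2).sum)) ∧
    -- (2) the optimal cost equals the optimal cost of the reduced problem
    optCost ψ χE sInit sGoal =
      optCost (psiRed ψ part st δM collapsed) (chiRed ψ χE part st γM collapsed)
        sInit sGoal := by
  intro collapsed χE
  have hroot : FollowsRoot ψ χE part st δM γM := fun s x t h hne => by
    obtain ⟨hδ, hst, hχ⟩ := hcross s x t h hne
    exact ⟨hδ, hst, congrArg ((↑) : ℝ≥0 → ℝ≥0∞) hχ⟩
  refine ⟨fun z hz _ k hk a b ha hab hb hin hprev hnext => ?_, ?_⟩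
  · exact entry_eq_st_and_cExit_le_of_getElem hroot (connectsFrom_iff_isRun.mp hz).2
      (Ne.symm hk.2.2) ha hab hb hin hprev hnext
  · exact optCost_eq_optCost_reduced hroot (fun h => absurd rfl h.2.1) (fun h => h.2.2 rfl)

/-- Let Z be a hierarchical Mealy machine obtained by composing
sub-HiMMs under a root machine M (root states `QM`, root dynamics `δM`, `γM`; each
leaf state `s` lies in the block `part s`, entering a block happens at its start
state `st (part s)`, and crossing transitions follow the root machine and cost
`γM`).  For `s_init` contained in Z_i and `s_goal` contained in Z_j with i ≠ j:

(1) every optimal trajectory of Z from `s_init` to `s_goal` decomposes so that each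
maximal portion inside an intermediate (collapsed) sub-HiMM Z_k enters at the start
state `st k` and traverses Z_k to an exit with cost at least `c_x^{Z_k}` for the
exiting input `x`; and

(2) consequently, the optimal cost from `s_init` to `s_goal` in Z equals the optimal
cost in the reduced problem in which each intermediate sub-HiMM Z_k is replaced by a
single state with exit costs `c_x^{Z_k}`. -/
theorem stmt18 (ψ : S → I → Option S) (χ : S → I → ℝ≥0)
    (part : S → QM) (st : QM → S) (IsSub : QM → Prop)
    (δM : QM → I → Option QM) (γM : QM → I → ℝ≥0)
    (hpart : ∀ q, part (st q) = q)
    (hplain : ∀ s, ¬ IsSub (part s) → s = st (part s))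
    (hcross : ∀ s x t, ψ s x = some t → part t ≠ part s →
      δM (part s) x = some (part t) ∧ t = st (part t) ∧ χ s x = γM (part s) x)
    (sInit sGoal : S)
    (hij : part sInit ≠ part sGoal)
    (hsubI : IsSub (part sInit)) (hsubJ : IsSub (part sGoal)) :
    -- the collapsed (intermediate) sub-HiMMs and the `ℝ≥0∞`-valued flat cost
    let collapsed : QM → Prop := fun q => IsSub q ∧ q ≠ part sInit ∧ q ≠ part sGoal
    let χE : S → I → ℝ≥0∞ := fun s x => (χ s x : ℝ≥0∞)
    -- (1) decomposition of optimal trajectories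
    (∀ z, ConnectsFrom ψ sInit sGoal z → tcost χE z = optCost ψ χE sInit sGoal →
      ∀ k, collapsed k → ∀ a b : ℕ, 0 < a → a ≤ b → b < z.length →
        (∀ idx, a ≤ idx → idx ≤ b → ∀ p ∈ z[idx]?, part p.1 = k) →
        (∀ p ∈ z[a-1]?, part p.1 ≠ k) →
        (∀ p ∈ z[b+1]?, part p.1 ≠ k) →
        (∀ p ∈ z[a]?, p.1 = st k) ∧
        (∀ p ∈ z[b]?, cExit ψ χE part st k p.2 ≤
          (((z.drop a).take (b - a)).map fun r => χE r.1 r.2).sum)) ∧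
    -- (2) the optimal cost equals the optimal cost of the reduced problem
    optCost ψ χE sInit sGoal =
      optCost (psiRed ψ part st δM collapsed) (chiRed ψ χE part st γM collapsed)
        sInit sGoal :=
  stmt18_general ψ χ part st IsSub δM γM hcross sInit sGoal

end
end
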